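/- Counterexample showing the loss operator bound fails outside the restricted range: Let n ≥ 2, Φ(x) = |x|^{−n/2}, and g(x) = |x|^{−n/2} (ln|x|)^{−1} for |x| ≥ e and g(x) = 0 otherwise. Then g ∈ L²(ℝⁿ) and Φ belongs to weak-L²(ℝⁿ), yet for every v ∈ ℝⁿ the convolution integral diverges: ∫_{ℝⁿ} g(x) |v − x|^{−n/2} dx = +∞. -/

import Mathlib

open MeasureTheory Real Filter
open scoped ENNReal NNReal RealInnerProductSpace Topology Classical

noncomputable section

/-- `ℝⁿ` with `n = m + 2 ≥ 2`, as a Euclidean space. -/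
abbrev Euc (m : ℕ) := EuclideanSpace ℝ (Fin (m + 2))

/-- The surface measure on the unit sphere `S^{n-1} ⊆ ℝⁿ` (`n = m + 2`). -/
def sphMeasure (m : ℕ) : Measure (Metric.sphere (0 : Euc m) 1) :=
  (volume : Measure (Euc m)).toSphere

/-- `|S^k|`, the surface measure of the unit sphere in `ℝ^{k+1}`. -/
def sphArea (k : ℕ) : ℝ :=
  (((volume : Measure (EuclideanSpace ℝ (Fin (k + 1)))).toSphere) Set.univ).toReal

/-- `β(z) = (1 + e(z))/2`, where `e` is the restitution coefficient. -/
def betaF (e : ℝ → ℝ) (z : ℝ) : ℝ := (1 + e z) / 2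

/-- The unit vector `û` in the direction of `u` (junk value `0` for `u = 0`). -/
def uhat {m : ℕ} (u : Euc m) : Euc m := ‖u‖⁻¹ • u

/-- The impact velocity `|u| √((1 - û⬝ω)/2)`. -/
def impactVel {m : ℕ} (u ω : Euc m) : ℝ := ‖u‖ * Real.sqrt ((1 - ⟪uhat u, ω⟫) / 2)

/-- `u⁻ = (β/2)(u - |u|ω)`, with `β` evaluated at the impact velocity. -/
def uminus (e : ℝ → ℝ) {m : ℕ} (u ω : Euc m) : Euc m :=
  (betaF e (impactVel u ω) / 2) • (u - ‖u‖ • ω)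

/-- `u⁺ = u - u⁻`. -/
def uplusv (e : ℝ → ℝ) {m : ℕ} (u ω : Euc m) : Euc m := u - uminus e u ω

/-- The angular averaging operator `P(ψ, φ)(u) = ∫_{S^{n-1}} ψ(u⁻) φ(u⁺) b(û⬝ω) dω`. -/
def Pop (m : ℕ) (e b : ℝ → ℝ) (ψ φ : Euc m → ℝ) (u : Euc m) : ℝ :=
  ∫ ω : Metric.sphere (0 : Euc m) 1,
    ψ (uminus e u ω) * φ (uplusv e u ω) * b ⟪uhat u, (ω : Euc m)⟫ ∂(sphMeasure m)

/-- The weak form of the gain Boltzmann operator: with `u = v - v₊` and `v' = v - u⁻`,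
`∫∫∫ f(v) g(v₊) ψ(v') K(u) b(û⬝ω) dω dv₊ dv`, for a general radial kernel `K`
(`K u = |u|^λ` for variable hard/soft potentials). -/
def QplusWeak (m : ℕ) (e b : ℝ → ℝ) (K : Euc m → ℝ) (f g ψ : Euc m → ℝ) : ℝ :=
  ∫ v : Euc m, ∫ w : Euc m,
    f v * g w *
      ∫ ω : Metric.sphere (0 : Euc m) 1,
        ψ (v - uminus e (v - w) ω) *
          (K (v - w) * b ⟪uhat (v - w), (ω : Euc m)⟫) ∂(sphMeasure m)

/-- The density of the measure `dξ_n^b(s) = b(s) (1-s²)^{(n-3)/2} ds` on `[-1,1]`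
(here `n = m + 2`, so the exponent is `(m-1)/2`). -/
def xiDens (m : ℕ) (b : ℝ → ℝ) (s : ℝ) : ℝ := b s * (1 - s ^ 2) ^ (((m : ℝ) - 1) / 2)

/-- Integration of `F` against the measure `ξ_n^b` on `[-1,1]`. -/
def xiInt (m : ℕ) (b : ℝ → ℝ) (F : ℝ → ℝ) : ℝ :=
  ∫ s in (-1 : ℝ)..1, F s * xiDens m b s

/-- `toReal` of the reciprocal of an extended exponent: `1/p`, with `1/∞ = 0`. -/
def invT (p : ℝ≥0∞) : ℝ := (p⁻¹).toReal

/-- `toReal` of the Hölder conjugate exponent `p' = (1 - 1/p)⁻¹` (with `1' = ∞ ↦ 0`). -/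
def conjT (p : ℝ≥0∞) : ℝ := ((1 - p⁻¹)⁻¹ : ℝ≥0∞).toReal

/-- The weak-`L^s` (quasi-)norm `‖f‖_{weak-L^s} = sup_{t>0} t |{x : |f(x)| > t}|^{1/s}`. -/
def weakLpNorm {m : ℕ} (f : Euc m → ℝ) (s : ℝ≥0∞) : ℝ≥0∞ :=
  ⨆ t : ℝ≥0, (t : ℝ≥0∞) * (volume {x : Euc m | (t : ℝ) < |f x|}) ^ invT s

/-- The potential `Φ(x) = |x|^{-n/2}`. -/
def cePhi (m : ℕ) (x : Euc m) : ℝ := ‖x‖ ^ (-((m : ℝ) + 2) / 2)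

/-- The function `g(x) = |x|^{-n/2} (ln |x|)^{-1}` for `|x| ≥ e`, and `0` otherwise. -/
def ceG (m : ℕ) (x : Euc m) : ℝ :=
  if Real.exp 1 ≤ ‖x‖ then ‖x‖ ^ (-((m : ℝ) + 2) / 2) * (Real.log ‖x‖)⁻¹ else 0


/-!
Everything reduces to one-dimensional integrals by polar coordinates, where the Jacobian `r^{n-1}`
turns `|x|^{-n}` into `r⁻¹`. Thus `‖g‖₂²` is a multiple of `∫_e^∞ dr / (r log² r) < ∞`. The level
set `{Φ > t}` lies in the ball of radius `t^{-2/n}`, of volume `C t^{-2}`, so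
`t |{Φ > t}|^{1/2} ≤ C^{1/2}`. Finally, for `|x| > e + |v|` we have `|v - x| ≤ 2|x|`, so the
integrand dominates `2^{-n/2} |x|^{-n} / log |x|`, whose radial integral `∫^∞ dr / (r log r)`
diverges.
-/

open Set Metric

section AddHaar

variable {E : Type*} [NormedAddCommGroup E] [NormedSpace ℝ E] [Nontrivial E]
  [FiniteDimensional ℝ E] [MeasurableSpace E] [BorelSpace E] (μ : Measure E) [μ.IsAddHaarMeasure]

theorem lintegral_fun_norm_addHaar {f : ℝ → ℝ≥0∞} (hf : Measurable f) :
    ∫⁻ x, f ‖x‖ ∂μ = μ.toSphere univ *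
      ∫⁻ r in Ioi (0 : ℝ), ENNReal.ofReal (r ^ (Module.finrank ℝ E - 1)) * f r := by
  calc ∫⁻ x, f ‖x‖ ∂μ = ∫⁻ x : ({(0 : E)}ᶜ : Set E), f ‖x.1‖ ∂(μ.comap Subtype.val) := by
        rw [lintegral_subtype_comap (measurableSet_singleton 0).compl (fun x => f ‖x‖),
          restrict_compl_singleton]
    _ = ∫⁻ p, f p.2.1 ∂(μ.toSphere.prod (.volumeIoiPow (Module.finrank ℝ E - 1))) := by
        rw [← μ.measurePreserving_homeomorphUnitSphereProd.lintegral_comp (by fun_prop)]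
        simp only [homeomorphUnitSphereProd_apply_snd_coe]
    _ = μ.toSphere univ *
          ∫⁻ r, f r.1 ∂(Measure.volumeIoiPow (Module.finrank ℝ E - 1)) := by
        rw [lintegral_prod _ (by fun_prop)]
        simp only [lintegral_const, mul_comm]
    _ = _ := by
        rw [Measure.volumeIoiPow, lintegral_withDensity_eq_lintegral_mul _ (by fun_prop)
          (by fun_prop)]
        simp only [Pi.mul_apply]
        rw [lintegral_subtype_comap measurableSet_Ioi
          (fun r => ENNReal.ofReal (r ^ (Module.finrank ℝ E - 1)) * f r)]

theorem addHaar_setOf_lt_norm_rpow_le {a t : ℝ} (ha : a < 0) (ht : 0 < t) :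
    μ {x | t < ‖x‖ ^ a} ≤ ENNReal.ofReal (t ^ (Module.finrank ℝ E / a)) * μ (ball 0 1) := by
  calc μ {x | t < ‖x‖ ^ a} ≤ μ (ball 0 (t ^ a⁻¹)) := measure_mono fun x (hx : t < ‖x‖ ^ a) => ?_
    _ = ENNReal.ofReal ((t ^ a⁻¹) ^ Module.finrank ℝ E) * μ (ball 0 1) :=
        μ.addHaar_ball 0 (by positivity)
    _ = _ := by rw [← Real.rpow_natCast, ← Real.rpow_mul ht.le, inv_mul_eq_div]
  have hx0 : 0 < ‖x‖ := by
    refine (norm_nonneg x).lt_of_ne fun h0 => ?_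
    rw [← h0, Real.zero_rpow ha.ne] at hx
    exact ht.not_gt hx
  exact mem_ball_zero_iff.mpr ((Real.lt_rpow_inv_iff_of_neg hx0 ht ha).mpr hx)

end AddHaar

theorem integrableOn_Ioi_inv_mul_inv_log_sq {R : ℝ} (hR : 1 < R) :
    IntegrableOn (fun r : ℝ => r⁻¹ * (Real.log r)⁻¹ ^ 2) (Ioi R) := by
  refine integrableOn_Ioi_deriv_of_nonneg' (g := fun r => -(Real.log r)⁻¹) (fun r hr => ?_)
    (fun r hr => ?_) Real.tendsto_log_atTop.inv_tendsto_atTop.neg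
  · have hr : 1 < r := hR.trans_le hr
    exact ((Real.hasDerivAt_log (by positivity)).inv (Real.log_pos hr).ne').neg.congr_deriv
      (by field_simp)
  · have := Real.log_pos (hR.trans hr)
    have : 0 < r := by linarith [hR.trans hr]
    positivity

theorem lintegral_Ioi_inv_mul_inv_log_eq_top {R : ℝ} (hR : 1 ≤ R) :
    ∫⁻ r in Ioi R, ENNReal.ofReal (r⁻¹ * (Real.log r)⁻¹) = ∞ := by
  have hderiv : ∀ᶠ r in atTop,
      HasDerivAt (fun s => Real.log (Real.log s)) (r⁻¹ * (Real.log r)⁻¹) r := by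
    filter_upwards [eventually_gt_atTop 1] with r hr
    exact ((Real.hasDerivAt_log (Real.log_pos hr).ne').comp r
      (Real.hasDerivAt_log (by positivity))).congr_deriv (mul_comm _ _)
  have hnot : ¬ IntegrableOn (fun r : ℝ => r⁻¹ * (Real.log r)⁻¹) (Ioi R) :=
    not_integrableOn_of_tendsto_norm_atTop_of_deriv_isBigO_filter atTop (Ioi_mem_atTop R)
      (hderiv.mono fun r hr => hr.differentiableAt)
      (tendsto_norm_atTop_atTop.comp (Real.tendsto_log_atTop.comp Real.tendsto_log_atTop))
      (EventuallyEq.isBigO (hderiv.mono fun r hr => hr.deriv))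
  contrapose! hnot
  refine (lintegral_ofReal_ne_top_iff_integrable (by fun_prop) ?_).mp hnot
  refine (ae_restrict_iff' measurableSet_Ioi).mpr (ae_of_all _ fun r hr => ?_)
  have := Real.log_nonneg (hR.trans hr.le)
  have : 0 < r := by linarith [hR.trans_lt hr]
  positivity

theorem pow_add_one_mul_rpow_sq {r : ℝ} (hr : 0 < r) (m : ℕ) :
    r ^ (m + 1) * (r ^ (-((m : ℝ) + 2) / 2)) ^ 2 = r⁻¹ := by
  rw [← Real.rpow_natCast, ← Real.rpow_natCast (r ^ _), ← Real.rpow_mul hr.le,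
    ← Real.rpow_add hr, ← Real.rpow_neg_one]
  congr 1
  push_cast
  ring

theorem two_mul_norm_rpow_le_norm_sub_rpow {E : Type*} [SeminormedAddCommGroup E] {v x : E}
    {a : ℝ} (ha : a ≤ 0) (h : ‖v‖ < ‖x‖) : (2 * ‖x‖) ^ a ≤ ‖v - x‖ ^ a := by
  refine Real.rpow_le_rpow_of_nonpos ?_ ?_ ha
  · linarith [norm_sub_norm_le x v, norm_sub_rev v x]
  · linarith [norm_sub_le v x]

theorem weakLpNorm_norm_rpow_lt_top (m : ℕ) {p : ℝ≥0} (hp : p ≠ 0) :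
    weakLpNorm (fun x : Euc m => ‖x‖ ^ (-((m : ℝ) + 2) / p)) p < ∞ := by
  set C := volume (ball (0 : Euc m) 1)
  have hp' : (0 : ℝ) < p := NNReal.coe_pos.mpr (pos_iff_ne_zero.mpr hp)
  have hinv : invT p = (p : ℝ)⁻¹ := by simp [invT]
  have hC : C ^ (p : ℝ)⁻¹ < ∞ :=
    ENNReal.rpow_lt_top_of_nonneg (inv_nonneg.mpr hp'.le) measure_ball_lt_top.ne
  refine (iSup_le fun t => ?_).trans_lt hC
  rcases eq_zero_or_pos t with rfl | ht
  · simp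
  have ht' : (0 : ℝ) < t := ht
  have hexp : ((m + 2 : ℕ) : ℝ) / (-((m : ℝ) + 2) / p) = -p := by
    push_cast
    field_simp
  have hlevel := addHaar_setOf_lt_norm_rpow_le (volume : Measure (Euc m))
    (a := -((m : ℝ) + 2) / p) (div_neg_of_neg_of_pos (by linarith) hp') ht'
  rw [finrank_euclideanSpace_fin, hexp] at hlevel
  simp only [abs_of_nonneg (Real.rpow_nonneg (norm_nonneg _) _), hinv]
  calc (t : ℝ≥0∞) * volume {x : Euc m | (t : ℝ) < ‖x‖ ^ (-((m : ℝ) + 2) / p)} ^ (p : ℝ)⁻¹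
      ≤ t * (ENNReal.ofReal ((t : ℝ) ^ (-(p : ℝ))) * C) ^ (p : ℝ)⁻¹ := by gcongr
    _ = (t * ENNReal.ofReal (t : ℝ)⁻¹) * C ^ (p : ℝ)⁻¹ := by
        rw [ENNReal.mul_rpow_of_nonneg _ _ (by positivity), ENNReal.ofReal_rpow_of_pos
          (by positivity), ← Real.rpow_mul ht'.le, neg_mul, mul_inv_cancel₀ hp'.ne',
          Real.rpow_neg_one, mul_assoc]
    _ = C ^ (p : ℝ)⁻¹ := by
        rw [← ENNReal.ofReal_coe_nnreal, ← ENNReal.ofReal_mul ht'.le, mul_inv_cancel₀ ht'.ne',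
          ENNReal.ofReal_one, one_mul]

theorem weakLpNorm_cePhi_lt_top (m : ℕ) : weakLpNorm (cePhi m) 2 < ∞ := by
  convert weakLpNorm_norm_rpow_lt_top m (p := 2) two_ne_zero using 2
  · ext x
    simp [cePhi]
  · simp

def ceGProfile (m : ℕ) (r : ℝ) : ℝ :=
  if Real.exp 1 ≤ r then r ^ (-((m : ℝ) + 2) / 2) * (Real.log r)⁻¹ else 0

theorem ceG_eq_comp_norm (m : ℕ) : ceG m = ceGProfile m ∘ norm := rfl

theorem measurable_ceGProfile (m : ℕ) : Measurable (ceGProfile m) :=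
  Measurable.ite measurableSet_Ici (by fun_prop) measurable_const

theorem ceGProfile_nonneg (m : ℕ) (r : ℝ) : 0 ≤ ceGProfile m r := by
  unfold ceGProfile
  split_ifs with hr
  · have := Real.log_pos (Real.one_lt_exp_iff.mpr one_pos |>.trans_le hr)
    have : 0 < r := (Real.exp_pos 1).trans_le hr
    positivity
  · exact le_rfl

theorem memLp_ceG (m : ℕ) : MemLp (ceG m) 2 (volume : Measure (Euc m)) := by
  rw [ceG_eq_comp_norm, memLp_two_iff_integrable_sq
    ((measurable_ceGProfile m).comp measurable_norm).aestronglyMeasurable]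
  refine (integrable_fun_norm_addHaar volume (f := fun r => ceGProfile m r ^ 2)).mpr ?_
  simp only [finrank_euclideanSpace_fin, smul_eq_mul, show m + 2 - 1 = m + 1 from rfl]
  have hfar : IntegrableOn (fun r : ℝ => r⁻¹ * (Real.log r)⁻¹ ^ 2) (Ici (Real.exp 1)) :=
    (integrableOn_Ici_iff_integrableOn_Ioi).2
      (integrableOn_Ioi_inv_mul_inv_log_sq (Real.one_lt_exp_iff.mpr one_pos))
  refine ((integrable_indicator_iff measurableSet_Ici).mpr hfar).integrableOn.congr_fun
    (fun r (hr : 0 < r) => ?_) measurableSet_Ioi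
  by_cases hre : Real.exp 1 ≤ r
  · rw [indicator_of_mem (mem_Ici.mpr hre), ceGProfile, if_pos hre, mul_pow, ← mul_assoc,
      pow_add_one_mul_rpow_sq hr, inv_pow]
  · simp [ceGProfile, hre]

theorem lintegral_pow_mul_indicator_ceGProfile_eq_top (m : ℕ) {R : ℝ} (hR : Real.exp 1 ≤ R) :
    ∫⁻ r in Ioi 0, ENNReal.ofReal (r ^ (m + 1)) * (Ioi R).indicator
      (fun r => ENNReal.ofReal (ceGProfile m r * (2 * r) ^ (-((m : ℝ) + 2) / 2))) r = ∞ := by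
  set a : ℝ := -((m : ℝ) + 2) / 2
  refine eq_top_iff.mpr ?_
  calc ∞ = ENNReal.ofReal (2 ^ a) * ∫⁻ r in Ioi R, ENNReal.ofReal (r⁻¹ * (Real.log r)⁻¹) := by
        rw [lintegral_Ioi_inv_mul_inv_log_eq_top ((Real.one_lt_exp_iff.mpr one_pos).le.trans hR),
          ENNReal.mul_top (by positivity)]
    _ = ∫⁻ r in Ioi R, ENNReal.ofReal (r ^ (m + 1)) * (Ioi R).indicator
          (fun r => ENNReal.ofReal (ceGProfile m r * (2 * r) ^ a)) r := by
        rw [← lintegral_const_mul' _ _ ENNReal.ofReal_ne_top]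
        refine setLIntegral_congr_fun measurableSet_Ioi fun r (hr : R < r) => ?_
        have hr0 : 0 < r := (Real.exp_pos 1).trans_le hR |>.trans hr
        rw [indicator_of_mem (mem_Ioi.mpr hr), ceGProfile, if_pos (hR.trans hr.le),
          ← ENNReal.ofReal_mul (by positivity), ← ENNReal.ofReal_mul (by positivity)]
        congr 1
        calc 2 ^ a * (r⁻¹ * (Real.log r)⁻¹)
            = 2 ^ a * (r ^ (m + 1) * (r ^ a) ^ 2) * (Real.log r)⁻¹ := by
              rw [pow_add_one_mul_rpow_sq hr0]; ring
          _ = _ := by rw [Real.mul_rpow zero_le_two hr0.le]; ring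
    _ ≤ _ := lintegral_mono_set (Ioi_subset_Ioi ((Real.exp_pos 1).trans_le hR).le)

theorem lintegral_ceG_mul_norm_sub_rpow_eq_top (m : ℕ) (v : Euc m) :
    ∫⁻ x : Euc m, ENNReal.ofReal (ceG m x * ‖v - x‖ ^ (-((m : ℝ) + 2) / 2)) = ∞ := by
  set a : ℝ := -((m : ℝ) + 2) / 2
  have ha : a ≤ 0 := by
    have : (0 : ℝ) ≤ m := m.cast_nonneg
    simp only [a]
    linarith
  set R := Real.exp 1 + ‖v‖
  have hR : Real.exp 1 ≤ R := le_add_of_nonneg_right (norm_nonneg v)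
  set k : ℝ → ℝ≥0∞ := (Ioi R).indicator fun r => ENNReal.ofReal (ceGProfile m r * (2 * r) ^ a)
    with hk_def
  have hk : Measurable k :=
    (ENNReal.measurable_ofReal.comp ((measurable_ceGProfile m).mul (by fun_prop))).indicator
      measurableSet_Ioi
  have hle : ∀ x : Euc m, k ‖x‖ ≤ ENNReal.ofReal (ceG m x * ‖v - x‖ ^ a) := by
    intro x
    by_cases hx : R < ‖x‖
    · rw [hk_def, indicator_of_mem (mem_Ioi.mpr hx)]
      refine ENNReal.ofReal_le_ofReal (mul_le_mul_of_nonneg_left ?_ (ceGProfile_nonneg m _))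
      exact two_mul_norm_rpow_le_norm_sub_rpow ha (by linarith [Real.exp_pos 1])
    · rw [hk_def, indicator_of_notMem (notMem_Ioi.mpr (not_lt.mp hx))]
      exact zero_le
  have hsphere : (volume : Measure (Euc m)).toSphere univ ≠ 0 :=
    Measure.measure_univ_ne_zero.mpr (Measure.toSphere_ne_zero _)
  refine eq_top_iff.mpr ?_
  calc ∞ = (volume : Measure (Euc m)).toSphere univ *
        ∫⁻ r in Ioi 0, ENNReal.ofReal (r ^ (m + 1)) * k r := by
        rw [lintegral_pow_mul_indicator_ceGProfile_eq_top m hR, ENNReal.mul_top hsphere]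
    _ = ∫⁻ x : Euc m, k ‖x‖ := by
        rw [lintegral_fun_norm_addHaar _ hk, finrank_euclideanSpace_fin]; rfl
    _ ≤ _ := lintegral_mono hle

/-- **Counterexample showing the loss operator bound fails outside the restricted
range**: with `Φ(x) = |x|^{-n/2}` and `g` as above, `g ∈ L²(ℝⁿ)` and `Φ` belongs to
weak-`L²(ℝⁿ)`, yet for every `v ∈ ℝⁿ` the convolution integral diverges:
`∫ g(x) |v-x|^{-n/2} dx = +∞`. -/
theorem loss_counterexample (m : ℕ) :
    MemLp (ceG m) 2 (volume : Measure (Euc m)) ∧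
    weakLpNorm (cePhi m) 2 < ∞ ∧
    ∀ v : Euc m,
      (∫⁻ x : Euc m, ENNReal.ofReal (ceG m x * ‖v - x‖ ^ (-((m : ℝ) + 2) / 2))) = ∞ :=
  ⟨memLp_ceG m, weakLpNorm_cePhi_lt_top m, lintegral_ceG_mul_norm_sub_rpow_eq_top m⟩

end
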